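/- arXiv:1803.07778 — 6 statements merged into one kernel-verified Lean document; each statement's English description precedes it below -/
import Mathlib

section
/- Let K be a field, 0 < d < m integers, A a d×m matrix over K of rank d, and B an (m−d)×m matrix over K of rank m−d such that A·Bᵀ = 0. Then for every subset I ⊆ {1,…,m} with complement J = {1,…,m} \ I, one has rk(B_I) + |J| = (m − d) + rk(A_J). -/
/-!
The rows of `B` span `ker A`: they lie in it because `A * Bᵀ = 0`, and both spaces have dimension
`m - d`. Hence `rk B_I` is the dimension of the image of `ker A` under restriction to the
coordinates in `I`. The kernel of this restriction on `ker A` consists of the vectors of `ker A`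
supported on `J`, i.e. of `ker A_J` extended by zero, so rank–nullity for the restriction and for
`A_J` yields the formula.
-/

open Matrix
/-- The submatrix of `A` formed by the columns indexed by the subset `I`. -/
noncomputable def colSubmatrix {K : Type*} [Field K] {d m : ℕ}
    (A : Matrix (Fin d) (Fin m) K) (I : Finset (Fin m)) :
    Matrix (Fin d) {x : Fin m // x ∈ I} K :=
  A.submatrix id (fun j => (j : Fin m))

open Module

theorem Submodule.finrank_comap_eq_finrank_inf_range {R V W : Type*} [Semiring R]
    [AddCommMonoid V] [Module R V] [AddCommMonoid W] [Module R W] {f : V →ₗ[R] W}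
    (hf : Function.Injective f) (p : Submodule R W) :
    finrank R (p.comap f) = finrank R ↥(p ⊓ LinearMap.range f) := by
  rw [inf_comm, ← Submodule.map_comap_eq]
  exact (Submodule.equivMapOfInjective f hf _).finrank_eq

theorem Submodule.finrank_map_add_finrank_inf_ker {K V W : Type*} [DivisionRing K]
    [AddCommGroup V] [Module K V] [FiniteDimensional K V] [AddCommGroup W] [Module K W]
    (f : V →ₗ[K] W) (p : Submodule K V) :
    finrank K (p.map f) + finrank K ↥(p ⊓ LinearMap.ker f) = finrank K p := by
  have := (f.domRestrict p).finrank_range_add_finrank_ker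
  rwa [LinearMap.range_domRestrict, LinearMap.ker_domRestrict,
    Submodule.finrank_comap_eq_finrank_inf_range p.injective_subtype, Submodule.range_subtype,
    inf_comm] at this

theorem LinearMap.ker_funLeft_val_eq_range_extendByZero {R n : Type*} [Semiring R] [Fintype n]
    [DecidableEq n] (I : Finset n) :
    LinearMap.ker (LinearMap.funLeft R R (Subtype.val : I → n)) =
      LinearMap.range (Function.ExtendByZero.linearMap R (Subtype.val : ↥Iᶜ → n)) := by
  ext x
  simp only [LinearMap.mem_ker, LinearMap.mem_range, funext_iff, LinearMap.funLeft_apply,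
    Function.ExtendByZero.linearMap_apply, Pi.zero_apply, Subtype.forall]
  constructor
  · intro hx
    refine ⟨fun j => x j, fun k => ?_⟩
    by_cases hk : k ∈ I
    · rw [hx k hk, Function.extend_apply' _ _ _ (by simpa using hk), Pi.zero_apply]
    · exact Subtype.val_injective.extend_apply _ _ ⟨k, Finset.mem_compl.2 hk⟩
  · rintro ⟨y, hy⟩ k hk
    rw [← hy, Function.extend_apply' _ _ _ (by simpa using hk), Pi.zero_apply]

namespace Matrix

variable {K ι κ n : Type*} [Field K]

theorem rank_submatrix_col_eq_finrank_map [Fintype ι] [Fintype κ] (B : Matrix ι n K)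
    (f : κ → n) :
    (B.submatrix id f).rank =
      finrank K ((LinearMap.range Bᵀ.mulVecLin).map (LinearMap.funLeft K K f)) := by
  rw [← rank_transpose, transpose_submatrix, rank, ← LinearMap.range_comp]
  rfl

variable [Fintype n]

theorem rank_add_finrank_ker_mulVecLin (A : Matrix ι n K) :
    A.rank + finrank K (LinearMap.ker A.mulVecLin) = Fintype.card n := by
  have := A.mulVecLin.finrank_range_add_finrank_ker
  rwa [finrank_fintype_fun_eq_card] at this

theorem range_mulVecLin_transpose_eq_ker [Fintype ι] [Fintype κ] {A : Matrix ι n K}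
    {B : Matrix κ n K} (hAB : A * Bᵀ = 0) (hrank : Fintype.card n ≤ A.rank + B.rank) :
    LinearMap.range Bᵀ.mulVecLin = LinearMap.ker A.mulVecLin := by
  apply Submodule.eq_of_le_of_finrank_le
  · rintro _ ⟨y, rfl⟩
    simp only [mulVecLin_apply, LinearMap.mem_ker, mulVec_mulVec, hAB, zero_mulVec]
  · have := A.rank_add_finrank_ker_mulVecLin
    have : finrank K (LinearMap.range Bᵀ.mulVecLin) = B.rank := B.rank_transpose
    omega

theorem mulVecLin_submatrix_col [Fintype κ] (A : Matrix ι n K) {f : κ → n}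
    (hf : Function.Injective f) :
    (A.submatrix id f).mulVecLin = A.mulVecLin ∘ₗ Function.ExtendByZero.linearMap K f := by
  ext x i
  refine Fintype.sum_of_injective f hf _ _ (fun j hj => ?_) (fun j => ?_)
  · simp [Function.extend_apply' _ _ _ (by simpa using hj)]
  · simp [hf.extend_apply]

theorem finrank_map_funLeft_ker_add_card_compl [DecidableEq n] (A : Matrix ι n K)
    (I : Finset n) :
    finrank K ((LinearMap.ker A.mulVecLin).map (LinearMap.funLeft K K (Subtype.val : I → n))) +
        Iᶜ.card =
      finrank K (LinearMap.ker A.mulVecLin) + (A.submatrix id (Subtype.val : ↥Iᶜ → n)).rank := by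
  have hsplit := Submodule.finrank_map_add_finrank_inf_ker
    (LinearMap.funLeft K K (Subtype.val : I → n)) (LinearMap.ker A.mulVecLin)
  have hsupported : finrank K ↥(LinearMap.ker A.mulVecLin ⊓
      LinearMap.ker (LinearMap.funLeft K K (Subtype.val : I → n))) =
      finrank K (LinearMap.ker (A.submatrix id (Subtype.val : ↥Iᶜ → n)).mulVecLin) := by
    rw [LinearMap.ker_funLeft_val_eq_range_extendByZero,
      ← Submodule.finrank_comap_eq_finrank_inf_range
        (Function.extend_injective Subtype.val_injective (0 : n → K)),
      mulVecLin_submatrix_col A Subtype.val_injective, LinearMap.ker_comp]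
  have hJ := (A.submatrix id (Subtype.val : ↥Iᶜ → n)).rank_add_finrank_ker_mulVecLin
  rw [Fintype.card_coe] at hJ
  omega

end Matrix

theorem rank_colSubmatrix_duality_general {K : Type*} [Field K] {d m : ℕ}
    (A : Matrix (Fin d) (Fin m) K) (B : Matrix (Fin (m - d)) (Fin m) K)
    (hA : A.rank = d) (hB : B.rank = m - d) (hAB : A * Bᵀ = 0)
    (I : Finset (Fin m)) :
    (colSubmatrix B I).rank + Iᶜ.card = (m - d) + (colSubmatrix A Iᶜ).rank := by
  have hdm : d ≤ m := hA ▸ A.rank_le_width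
  have hrow : LinearMap.range Bᵀ.mulVecLin = LinearMap.ker A.mulVecLin :=
    range_mulVecLin_transpose_eq_ker hAB (by rw [hA, hB, Fintype.card_fin]; omega)
  have hker : finrank K (LinearMap.ker A.mulVecLin) = m - d := by
    have := A.rank_add_finrank_ker_mulVecLin
    rw [Fintype.card_fin, hA] at this
    omega
  calc (colSubmatrix B I).rank + Iᶜ.card
      = finrank K ((LinearMap.ker A.mulVecLin).map (LinearMap.funLeft K K Subtype.val)) +
          Iᶜ.card := by
        rw [colSubmatrix, rank_submatrix_col_eq_finrank_map, hrow]
    _ = finrank K (LinearMap.ker A.mulVecLin) + (colSubmatrix A Iᶜ).rank :=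
        A.finrank_map_funLeft_ker_add_card_compl I
    _ = (m - d) + (colSubmatrix A Iᶜ).rank := by rw [hker]

/-- Let `0 < d < m`, let `A` be a `d×m` matrix of rank `d` and `B` an `(m−d)×m` matrix
of rank `m−d` over a field, with `A·Bᵀ = 0`. Then for every subset `I ⊆ {1,…,m}` with
complement `J`, one has `rk(B_I) + |J| = (m−d) + rk(A_J)`. -/
theorem rank_colSubmatrix_duality {K : Type*} [Field K] {d m : ℕ}
    (hd : 0 < d) (hdm : d < m)
    (A : Matrix (Fin d) (Fin m) K) (B : Matrix (Fin (m - d)) (Fin m) K)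
    (hA : A.rank = d) (hB : B.rank = m - d) (hAB : A * Bᵀ = 0)
    (I : Finset (Fin m)) :
    (colSubmatrix B I).rank + Iᶜ.card = (m - d) + (colSubmatrix A Iᶜ).rank :=
  rank_colSubmatrix_duality_general A B hA hB hAB I
end

section
/- Let K be a field, 0 < d < m integers, A a d×m matrix over K of rank d, and B an (m−d)×m matrix over K of rank m−d such that A·Bᵀ = 0. Then A is semistable if and only if B is semistable; that is, one has ( for every subset I ⊆ {1,…,m}: d·|I| ≤ m·rk(A_I) ) if and only if ( for every subset I ⊆ {1,…,m}: (m−d)·|I| ≤ m·rk(B_I) ). -/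
/-!
Since `A · Bᵀ = 0` and the ranks are complementary, `Bᵀ` is injective with image exactly
`ker A`. For a set `I` of columns, a vector in `ker A_I` is a vector of `ker A` supported on `I`,
that is `Bᵀ w` for a `w` with `(B_{Iᶜ})ᵀ w = 0`; so `ker A_I ≅ ker (B_{Iᶜ})ᵀ`, and rank–nullity
gives `rk A_I + (m - d) = |I| + rk B_{Iᶜ}` (the rank function of the dual matroid). Semistability
of `A` at `Iᶜ` then yields semistability of `B` at `I`, and the hypotheses are symmetric in
`A` and `B`.
-/

open Matrix

namespace LinearMap

variable {K U V W P Q : Type*} [Field K]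
  [AddCommGroup U] [Module K U] [AddCommGroup V] [Module K V] [AddCommGroup W] [Module K W]
  [AddCommGroup P] [Module K P] [AddCommGroup Q] [Module K Q]

theorem finrank_ker_comp_of_injective (f : V →ₗ[K] W) {p : P →ₗ[K] V}
    (hp : Function.Injective p) :
    Module.finrank K (ker (f ∘ₗ p)) = Module.finrank K ↥(range p ⊓ ker f) := by
  rw [← Submodule.map_comap_eq, ← ker_comp]
  exact (Submodule.equivMapOfInjective p hp _).finrank_eq

theorem finrank_range_comp_add_eq_of_range_eq_ker [FiniteDimensional K U]
    [FiniteDimensional K P] {f : V →ₗ[K] W} {g : U →ₗ[K] V} {p : P →ₗ[K] V} {q : V →ₗ[K] Q}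
    (hg : Function.Injective g) (hgf : range g = ker f)
    (hp : Function.Injective p) (hpq : range p = ker q) :
    Module.finrank K (range (f ∘ₗ p)) + Module.finrank K U
      = Module.finrank K P + Module.finrank K (range (q ∘ₗ g)) := by
  have hker : Module.finrank K (ker (f ∘ₗ p)) = Module.finrank K (ker (q ∘ₗ g)) := by
    rw [finrank_ker_comp_of_injective f hp, finrank_ker_comp_of_injective q hg, ← hgf, ← hpq,
      inf_comm]
  have := (f ∘ₗ p).finrank_range_add_finrank_ker
  have := (q ∘ₗ g).finrank_range_add_finrank_ker
  omega

end LinearMap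

section ExtendByZero

variable (R : Type*) [Semiring R] {n : Type*} [Fintype n] [DecidableEq n] (I : Finset n)

theorem range_extendByZero_eq_ker_funLeft_compl :
    LinearMap.range (Function.ExtendByZero.linearMap R (Subtype.val : I → n))
      = LinearMap.ker (LinearMap.funLeft R R (Subtype.val : ↥(Iᶜ) → n)) := by
  ext x
  constructor
  · rintro ⟨v, rfl⟩
    funext ⟨j, hj⟩
    refine Function.extend_apply' _ _ _ ?_
    rintro ⟨i, rfl⟩
    exact Finset.mem_compl.mp hj i.2
  · intro hx
    refine ⟨fun i => x i, funext fun j => ?_⟩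
    rw [Function.ExtendByZero.linearMap_apply]
    by_cases hj : j ∈ I
    · exact Subtype.val_injective.extend_apply _ _ ⟨j, hj⟩
    · rw [Function.extend_apply' _ _ _ ?_]
      · exact (congrFun hx ⟨j, Finset.mem_compl.mpr hj⟩).symm
      · rintro ⟨i, rfl⟩
        exact hj i.2

end ExtendByZero

section

variable {K : Type*} [Field K] {d e m : ℕ}

theorem colSubmatrix_mulVecLin (A : Matrix (Fin d) (Fin m) K) (I : Finset (Fin m)) :
    (colSubmatrix A I).mulVecLin
      = A.mulVecLin ∘ₗ Function.ExtendByZero.linearMap K (Subtype.val : I → Fin m) := by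
  refine LinearMap.ext fun v => funext fun i => ?_
  simp only [mulVecLin_apply, LinearMap.comp_apply, Function.ExtendByZero.linearMap_apply,
    mulVec, dotProduct, colSubmatrix, submatrix_apply, id]
  rw [← Fintype.sum_subtype_add_sum_subtype (· ∈ I),
    Fintype.sum_eq_zero (fun k : {k // k ∉ I} => _)]
  · simp only [Subtype.val_injective.extend_apply, add_zero]
    -- the two sums differ only in the `Fintype` instance on `↥I`
    convert rfl
  · intro k
    rw [Function.extend_apply' _ _ _ (by rintro ⟨j, hj⟩; exact k.2 (hj ▸ j.2)), Pi.zero_apply,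
      mul_zero]

theorem transpose_colSubmatrix_mulVecLin (B : Matrix (Fin e) (Fin m) K)
    (I : Finset (Fin m)) :
    (colSubmatrix B I)ᵀ.mulVecLin = LinearMap.funLeft K K Subtype.val ∘ₗ Bᵀ.mulVecLin :=
  rfl

theorem Matrix.mulVecLin_transpose_injective_of_rank_eq {B : Matrix (Fin e) (Fin m) K}
    (hB : B.rank = e) : Function.Injective Bᵀ.mulVecLin := by
  have hrank : Module.finrank K (LinearMap.range Bᵀ.mulVecLin) = e := by
    rw [← Matrix.rank, rank_transpose, hB]
  have := Bᵀ.mulVecLin.finrank_range_add_finrank_ker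
  rw [← LinearMap.ker_eq_bot, ← Submodule.finrank_eq_zero]
  simp only [Module.finrank_fin_fun] at this
  omega

theorem Matrix.range_mulVecLin_transpose_eq_ker_s5 {A : Matrix (Fin d) (Fin m) K}
    {B : Matrix (Fin e) (Fin m) K} (hA : A.rank + e = m) (hB : B.rank = e) (hAB : A * Bᵀ = 0) :
    LinearMap.range Bᵀ.mulVecLin = LinearMap.ker A.mulVecLin := by
  refine Submodule.eq_of_le_of_finrank_eq ?_ ?_
  · rintro _ ⟨w, rfl⟩
    rw [LinearMap.mem_ker, mulVecLin_apply, mulVecLin_apply, mulVec_mulVec, hAB, zero_mulVec]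
  · have := A.mulVecLin.finrank_range_add_finrank_ker
    rw [← Matrix.rank, Module.finrank_fin_fun] at this
    rw [← Matrix.rank, rank_transpose]
    omega

theorem rank_colSubmatrix_add_eq {A : Matrix (Fin d) (Fin m) K} {B : Matrix (Fin e) (Fin m) K}
    (hA : A.rank + e = m) (hB : B.rank = e) (hAB : A * Bᵀ = 0) (I : Finset (Fin m)) :
    (colSubmatrix A I).rank + e = I.card + (colSubmatrix B Iᶜ).rank := by
  have key := LinearMap.finrank_range_comp_add_eq_of_range_eq_ker
    (mulVecLin_transpose_injective_of_rank_eq hB) (range_mulVecLin_transpose_eq_ker_s5 hA hB hAB)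
    (Function.extend_injective Subtype.val_injective (0 : Fin m → K))
    (range_extendByZero_eq_ker_funLeft_compl K I)
  rwa [← colSubmatrix_mulVecLin, ← transpose_colSubmatrix_mulVecLin, ← Matrix.rank,
    ← Matrix.rank, rank_transpose, Module.finrank_fin_fun, Module.finrank_fintype_fun_eq_card,
    Fintype.card_coe] at key

end

theorem semistable_of_semistable_of_orthogonal {K : Type*} [Field K] {d e m : ℕ}
    {A : Matrix (Fin d) (Fin m) K} {B : Matrix (Fin e) (Fin m) K}
    (hdem : d + e = m) (hA : A.rank = d) (hB : B.rank = e) (hAB : A * Bᵀ = 0)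
    (hsemi : ∀ I : Finset (Fin m), d * I.card ≤ m * (colSubmatrix A I).rank) :
    ∀ J : Finset (Fin m), e * J.card ≤ m * (colSubmatrix B J).rank := by
  intro J
  have hrank := rank_colSubmatrix_add_eq (by omega) hB hAB Jᶜ
  rw [compl_compl] at hrank
  have hcard : J.card + Jᶜ.card = m := by rw [Finset.card_add_card_compl, Fintype.card_fin]
  have := hsemi Jᶜ
  nlinarith

theorem semistable_iff_semistable_of_orthogonal_general {K : Type*} [Field K] {d m : ℕ}
    (hdm : d < m)
    (A : Matrix (Fin d) (Fin m) K) (B : Matrix (Fin (m - d)) (Fin m) K)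
    (hA : A.rank = d) (hB : B.rank = m - d) (hAB : A * Bᵀ = 0) :
    (∀ I : Finset (Fin m), d * I.card ≤ m * (colSubmatrix A I).rank)
    ↔ (∀ I : Finset (Fin m), (m - d) * I.card ≤ m * (colSubmatrix B I).rank) := by
  have hBA : B * Aᵀ = 0 := by simpa using congrArg transpose hAB
  exact ⟨semistable_of_semistable_of_orthogonal (by omega) hA hB hAB,
    semistable_of_semistable_of_orthogonal (by omega) hB hA hBA⟩

/-- Let `0 < d < m`, let `A` be a `d×m` matrix of rank `d` and `B` an `(m−d)×m` matrix
of rank `m−d` over a field, with `A·Bᵀ = 0`. Then `A` is semistable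
(`d·|I| ≤ m·rk(A_I)` for all `I`) iff `B` is semistable
(`(m−d)·|I| ≤ m·rk(B_I)` for all `I`). -/
theorem semistable_iff_semistable_of_orthogonal {K : Type*} [Field K] {d m : ℕ}
    (hd : 0 < d) (hdm : d < m)
    (A : Matrix (Fin d) (Fin m) K) (B : Matrix (Fin (m - d)) (Fin m) K)
    (hA : A.rank = d) (hB : B.rank = m - d) (hAB : A * Bᵀ = 0) :
    (∀ I : Finset (Fin m), d * I.card ≤ m * (colSubmatrix A I).rank)
    ↔ (∀ I : Finset (Fin m), (m - d) * I.card ≤ m * (colSubmatrix B I).rank) :=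
  semistable_iff_semistable_of_orthogonal_general hdm A B hA hB hAB
end

section
/- Work in ℚ(t) and let p_k = ((−t)^k − (−t)^{−k}) / ((−t) − (−t)^{−1}) for k ≥ 1. Let z : {1,2,…} → ℚ(t) be a sequence with z_1 = 1. Then z satisfies the recursion z_{d+1} = Σ_{k≥1} ((2d)!/k!) Σ_{a_1+…+a_k = d, a_i > 0} Π_{i=1}^{k} ( p_{a_i}² · z_{a_i} / (2a_i)! ) for all d ≥ 1 if and only if it satisfies the recursion z_d = Σ_{k+l=d, k,l>0} z_k · z_l · p_k² · C(2d−3, 2k−1) for all d ≥ 2. -/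
open Finset

/-- `p k = ((−t)^k − (−t)^{−k}) / ((−t) − (−t)^{−1})` in `ℚ(t)`, the shifted Poincaré
polynomial of `ℙ^{k−1}` at `q = t²`. -/
noncomputable def shiftedP (k : ℕ) : RatFunc ℚ :=
  ((-RatFunc.X) ^ (k : ℤ) - (-RatFunc.X) ^ (-(k : ℤ)))
    / ((-RatFunc.X) - (-RatFunc.X)⁻¹)

namespace PoincareAux
open PowerSeries

abbrev R := RatFunc ℚ

instance : CharZero R := charZero_of_injective_algebraMap (algebraMap ℚ (RatFunc ℚ)).injective

example (m : ℕ) : (Nat.factorial m : R) ≠ 0 :=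
  Nat.cast_ne_zero.mpr (Nat.factorial_ne_zero m)

lemma coeff_pow_tuple (φ : PowerSeries R) (k n : ℕ) :
    PowerSeries.coeff n (φ ^ k)
      = ∑ c ∈ Finset.Nat.antidiagonalTuple k n, ∏ i, PowerSeries.coeff (c i) φ := by
  induction k generalizing n with
  | zero =>
    rcases n with _ | n
    · simp [Finset.Nat.antidiagonalTuple_zero_zero]
    · simp [Finset.Nat.antidiagonalTuple_zero_succ]
  | succ k ih =>
    rw [pow_succ, mul_comm, PowerSeries.coeff_mul]
    have : ∀ p ∈ Finset.HasAntidiagonal.antidiagonal n,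
        PowerSeries.coeff p.1 φ * PowerSeries.coeff p.2 (φ ^ k)
        = ∑ c ∈ Finset.Nat.antidiagonalTuple k p.2,
            PowerSeries.coeff p.1 φ * ∏ i, PowerSeries.coeff (c i) φ := by
      intro p _; rw [ih, Finset.mul_sum]
    rw [Finset.sum_congr rfl this, Finset.sum_sigma']
    refine Finset.sum_nbij' (fun x => Fin.cons x.1.1 x.2)
      (fun c => ⟨(c 0, ∑ i : Fin k, c i.succ), Fin.tail c⟩) ?_ ?_ ?_ ?_ ?_
    · rintro ⟨⟨a, b⟩, c⟩ h
      simp only [Finset.mem_sigma, Finset.HasAntidiagonal.mem_antidiagonal,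
        Finset.Nat.mem_antidiagonalTuple] at h
      rw [Finset.Nat.mem_antidiagonalTuple, Fin.sum_univ_succ]
      simp [h.2, h.1]
    · intro c hc
      rw [Finset.Nat.mem_antidiagonalTuple] at hc
      simp only [Finset.mem_sigma, Finset.HasAntidiagonal.mem_antidiagonal,
        Finset.Nat.mem_antidiagonalTuple]
      refine ⟨?_, rfl⟩
      rw [← hc, Fin.sum_univ_succ]
    · rintro ⟨⟨a, b⟩, c⟩ h
      simp only [Finset.mem_sigma, Finset.HasAntidiagonal.mem_antidiagonal,
        Finset.Nat.mem_antidiagonalTuple] at h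
      simp only [Fin.cons_zero, Fin.cons_succ, Fin.tail_cons, h.2]
    · intro c hc
      simp [Fin.cons_self_tail]
    · rintro ⟨⟨a, b⟩, c⟩ h
      rw [Fin.prod_univ_succ]
      simp [Fin.cons_zero, Fin.cons_succ]

noncomputable def fser (z : ℕ → R) : PowerSeries R :=
  PowerSeries.mk fun n => if n % 2 = 0 ∧ n ≠ 0 then
    (shiftedP (n/2))^2 * z (n/2) / (Nat.factorial n : R) else 0

noncomputable def hser (z : ℕ → R) : PowerSeries R :=
  PowerSeries.mk fun n => if n % 2 = 0 then z (n/2 + 1) / (Nat.factorial n : R) else 0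

noncomputable def Eser (z : ℕ → R) : PowerSeries R :=
  PowerSeries.mk fun n =>
    ∑ k ∈ Finset.range (n+1), PowerSeries.coeff n ((fser z)^k) / (Nat.factorial k : R)

variable (z : ℕ → R)

lemma coeff_fser (n : ℕ) : PowerSeries.coeff n (fser z)
    = if n % 2 = 0 ∧ n ≠ 0 then (shiftedP (n/2))^2 * z (n/2) / (Nat.factorial n : R) else 0 :=
  PowerSeries.coeff_mk _ _

lemma coeff_fser_two_mul (a : ℕ) (ha : a ≠ 0) : PowerSeries.coeff (2*a) (fser z)
    = (shiftedP a)^2 * z a / (Nat.factorial (2*a) : R) := by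
  rw [coeff_fser]
  have : (2*a) % 2 = 0 := by omega
  have h2 : (2*a)/2 = a := by omega
  simp [this, h2, ha, Nat.mul_ne_zero]

lemma coeff_hser (n : ℕ) : PowerSeries.coeff n (hser z)
    = if n % 2 = 0 then z (n/2 + 1) / (Nat.factorial n : R) else 0 :=
  PowerSeries.coeff_mk _ _

lemma coeff_Eser (n : ℕ) : PowerSeries.coeff n (Eser z)
    = ∑ k ∈ Finset.range (n+1), PowerSeries.coeff n ((fser z)^k) / (Nat.factorial k : R) :=
  PowerSeries.coeff_mk _ _

lemma prod_coeff_eq_zero {k : ℕ} {c : Fin k → ℕ}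
    (hc : ¬ (∀ i, (c i) % 2 = 0 ∧ c i ≠ 0)) :
    (∏ i, PowerSeries.coeff (c i) (fser z)) = 0 := by
  push_neg at hc
  obtain ⟨i, hi⟩ := hc
  apply Finset.prod_eq_zero (Finset.mem_univ i)
  rw [coeff_fser]
  by_cases h1 : (c i) % 2 = 0
  · simp [h1, hi h1]
  · simp [h1]

lemma coeff_pow_fser_odd {k n : ℕ} (hn : n % 2 = 1) :
    PowerSeries.coeff n ((fser z)^k) = 0 := by
  rw [coeff_pow_tuple]
  apply Finset.sum_eq_zero
  intro c hc
  apply prod_coeff_eq_zero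
  intro hall
  rw [Finset.Nat.mem_antidiagonalTuple] at hc
  have : (∑ i, c i) % 2 = 0 := by
    rw [Finset.sum_nat_mod]
    have : ∀ i ∈ Finset.univ, (c i) % 2 = 0 := fun i _ => (hall i).1
    rw [Finset.sum_congr rfl this]
    simp
  omega

lemma coeff_pow_fser_small {k n : ℕ} (hn : n < 2*k) :
    PowerSeries.coeff n ((fser z)^k) = 0 := by
  rw [coeff_pow_tuple]
  apply Finset.sum_eq_zero
  intro c hc
  apply prod_coeff_eq_zero
  intro hall
  rw [Finset.Nat.mem_antidiagonalTuple] at hc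
  have h2 : ∀ i ∈ Finset.univ, 2 ≤ c i := by
    intro i _
    have := hall i
    omega
  have := Finset.sum_le_sum h2
  simp at this
  omega

lemma coeff_pow_fser_even (k d : ℕ) (hd : 1 ≤ d) :
    PowerSeries.coeff (2*d) ((fser z)^k)
      = ∑ c ∈ (Finset.Nat.antidiagonalTuple k d).filter (fun c => ∀ i, 0 < c i),
          ∏ i, (shiftedP (c i)) ^ 2 * z (c i) / (Nat.factorial (2 * c i) : R) := by
  rw [coeff_pow_tuple]
  rw [← Finset.sum_filter_add_sum_filter_not _ (fun c => ∀ i, (c i) % 2 = 0 ∧ c i ≠ 0)]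
  have hz : ∑ c ∈ (Finset.Nat.antidiagonalTuple k (2*d)).filter
      (fun c => ¬ ∀ i, (c i) % 2 = 0 ∧ c i ≠ 0), ∏ i, PowerSeries.coeff (c i) (fser z) = 0 := by
    apply Finset.sum_eq_zero
    intro c hc
    exact prod_coeff_eq_zero z (Finset.mem_filter.mp hc).2
  rw [hz, add_zero]
  refine Finset.sum_nbij' (fun c i => c i / 2) (fun c i => 2 * c i) ?_ ?_ ?_ ?_ ?_
  · intro c hc
    rw [Finset.mem_filter, Finset.Nat.mem_antidiagonalTuple] at hc
    rw [Finset.mem_filter, Finset.Nat.mem_antidiagonalTuple]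
    constructor
    · have : ∀ i ∈ Finset.univ, c i / 2 * 2 = c i := by
        intro i _; have := (hc.2 i); omega
      calc ∑ i, c i / 2 = (∑ i, c i / 2 * 2) / 2 := by
            rw [← Finset.sum_mul]; omega
        _ = d := by rw [Finset.sum_congr rfl this, hc.1]; omega
    · intro i; beta_reduce; have := hc.2 i; omega
  · intro c hc
    rw [Finset.mem_filter, Finset.Nat.mem_antidiagonalTuple] at hc
    rw [Finset.mem_filter, Finset.Nat.mem_antidiagonalTuple]
    refine ⟨?_, ?_⟩
    · show (∑ i, 2 * c i) = 2 * d
      rw [← Finset.mul_sum, hc.1]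
    · intro i; beta_reduce; have := hc.2 i; omega
  · intro c hc
    rw [Finset.mem_filter] at hc
    funext i
    beta_reduce
    have := hc.2 i
    omega
  · intro c hc
    rw [Finset.mem_filter] at hc
    funext i
    beta_reduce
    have := hc.2 i
    omega
  · intro c hc
    rw [Finset.mem_filter] at hc
    apply Finset.prod_congr rfl
    intro i _
    have h1 := hc.2 i
    rw [coeff_fser]
    have h3 : 2 * (c i / 2) = c i := by omega
    simp only [h1.1, h1.2, ne_eq, not_false_eq_true, and_self, if_true]
    beta_reduce
    rw [h3]

lemma coeff_Eser_two_mul (d : ℕ) (hd : 1 ≤ d) :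
    PowerSeries.coeff (2*d) (Eser z)
      = ∑ k ∈ Finset.Icc 1 d,
          (∑ c ∈ (Finset.Nat.antidiagonalTuple k d).filter (fun c => ∀ i, 0 < c i),
            ∏ i, (shiftedP (c i)) ^ 2 * z (c i) / (Nat.factorial (2 * c i) : R))
          / (Nat.factorial k : R) := by
  rw [coeff_Eser]
  rw [← Finset.sum_subset (s₁ := Finset.Icc 1 d) (s₂ := Finset.range (2*d+1))]
  · apply Finset.sum_congr rfl
    intro k hk
    rw [Finset.mem_Icc] at hk
    rw [coeff_pow_fser_even z k d hd]
  · intro x hx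
    rw [Finset.mem_Icc] at hx
    rw [Finset.mem_range]
    omega
  · intro x hx hnx
    rw [Finset.mem_range] at hx
    rw [Finset.mem_Icc] at hnx
    rcases Nat.eq_zero_or_pos x with h0 | h0
    · subst h0
      simp only [pow_zero]
      rw [PowerSeries.coeff_one]
      have : ¬ (2*d = 0) := by omega
      simp [this]
    · have : 2*d < 2*x := by omega
      rw [coeff_pow_fser_small z this]
      simp

lemma A_iff (hz1 : z 1 = 1) :
    (∀ d : ℕ, 1 ≤ d →
      z (d + 1) = ∑ k ∈ Finset.Icc 1 d,
        ((Nat.factorial (2 * d) : RatFunc ℚ) / (Nat.factorial k : RatFunc ℚ)) *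
          ∑ c ∈ (Finset.Nat.antidiagonalTuple k d).filter (fun c => ∀ i, 0 < c i),
            ∏ i, (shiftedP (c i)) ^ 2 * z (c i) / (Nat.factorial (2 * c i) : RatFunc ℚ))
    ↔ hser z = Eser z := by
  have key : ∀ d : ℕ, 1 ≤ d →
      (∑ k ∈ Finset.Icc 1 d,
        ((Nat.factorial (2 * d) : R) / (Nat.factorial k : R)) *
          ∑ c ∈ (Finset.Nat.antidiagonalTuple k d).filter (fun c => ∀ i, 0 < c i),
            ∏ i, (shiftedP (c i)) ^ 2 * z (c i) / (Nat.factorial (2 * c i) : R))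
      = (Nat.factorial (2*d) : R) * PowerSeries.coeff (2*d) (Eser z) := by
    intro d hd
    rw [coeff_Eser_two_mul z d hd, Finset.mul_sum]
    apply Finset.sum_congr rfl
    intro k _
    rw [div_mul_eq_mul_div, mul_div_assoc]
  constructor
  · intro hA
    ext n
    by_cases h0 : n = 0
    · subst h0
      rw [coeff_hser, coeff_Eser]
      norm_num [hz1]
    by_cases h1 : n % 2 = 1
    · rw [coeff_hser, coeff_Eser]
      simp only [h1]
      norm_num
      symm
      apply Finset.sum_eq_zero
      intro k _
      rw [coeff_pow_fser_odd z h1]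
      simp
    · have h2 : n % 2 = 0 := by omega
      have hd : 1 ≤ n / 2 := by omega
      have hn : n = 2 * (n / 2) := by omega
      set d := n / 2 with hdd
      rw [coeff_hser]
      simp only [h2, if_true]
      rw [hn]
      have hzd := hA d hd
      rw [key d hd] at hzd
      have h2d : (2*d)/2 = d := by omega
      rw [h2d, hzd]
      rw [mul_comm, mul_div_assoc, div_self, mul_one]
      exact Nat.cast_ne_zero.mpr (Nat.factorial_ne_zero _)
  · intro hE d hd
    rw [key d hd, ← hE]
    rw [coeff_hser]
    have h2 : (2*d) % 2 = 0 := by omega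
    have h2d : (2*d)/2 = d := by omega
    simp only [h2, h2d, if_true]
    rw [mul_div_cancel₀]
    exact Nat.cast_ne_zero.mpr (Nat.factorial_ne_zero _)

lemma coeff_deriv_hser_even {n : ℕ} (hn : n % 2 = 0) :
    PowerSeries.coeff n (d⁄dX R (hser z)) = 0 := by
  rw [PowerSeries.coeff_derivative, coeff_hser]
  have : ¬ ((n+1) % 2 = 0) := by omega
  simp [this]

lemma coeff_mul_deriv_even {n : ℕ} (hn : n % 2 = 0) :
    PowerSeries.coeff n (d⁄dX R (fser z) * hser z) = 0 := by
  rw [PowerSeries.coeff_mul]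
  apply Finset.sum_eq_zero
  intro p hp
  rw [Finset.HasAntidiagonal.mem_antidiagonal] at hp
  by_cases h1 : p.1 % 2 = 0
  · rw [PowerSeries.coeff_derivative, coeff_fser]
    have : ¬ ((p.1+1) % 2 = 0 ∧ p.1 + 1 ≠ 0) := by omega
    rw [if_neg this, zero_mul, zero_mul]
  · rw [coeff_hser]
    have : ¬ (p.2 % 2 = 0) := by omega
    simp [this]

lemma coeff_deriv_hser_odd (m : ℕ) :
    PowerSeries.coeff (2*m+1) (d⁄dX R (hser z))
      = z (m+2) / (Nat.factorial (2*m+1) : R) := by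
  rw [PowerSeries.coeff_derivative, coeff_hser]
  have h1 : (2*m+1+1) % 2 = 0 := by omega
  have h2 : (2*m+1+1)/2 = m+1 := by omega
  have h3 : 2*m+1+1 = (2*m+1)+1 := by omega
  simp only [h1, h2, if_true]
  rw [h3, Nat.factorial_succ]
  have hne : ((2*m+1+1 : ℕ) : R) ≠ 0 := Nat.cast_ne_zero.mpr (by omega)
  have hfac : ((Nat.factorial (2*m+1) : ℕ) : R) ≠ 0 :=
    Nat.cast_ne_zero.mpr (Nat.factorial_ne_zero _)
  push_cast
  push_cast at hne
  field_simp

lemma coeff_mul_deriv_odd (m : ℕ) :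
    PowerSeries.coeff (2*m+1) (d⁄dX R (fser z) * hser z)
      = ∑ k ∈ Finset.Ico 1 (m+2),
          (shiftedP k)^2 * z k * z (m+2-k)
            / ((Nat.factorial (2*k-1) : R) * (Nat.factorial (2*m+2-2*k) : R)) := by
  rw [PowerSeries.coeff_mul, Finset.Nat.sum_antidiagonal_eq_sum_range_succ_mk]
  rw [← Finset.sum_filter_add_sum_filter_not _ (fun i => i % 2 = 1)]
  have hz2 : ∑ i ∈ (Finset.range (2*m+1+1)).filter (fun i => ¬ i % 2 = 1),
      PowerSeries.coeff i (d⁄dX R (fser z)) * PowerSeries.coeff (2*m+1-i) (hser z) = 0 := by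
    apply Finset.sum_eq_zero
    intro i hi
    rw [Finset.mem_filter] at hi
    rw [PowerSeries.coeff_derivative, coeff_fser]
    have : ¬ ((i+1) % 2 = 0 ∧ i + 1 ≠ 0) := by omega
    rw [if_neg this, zero_mul, zero_mul]
  rw [hz2, add_zero]
  refine Finset.sum_nbij' (fun i => (i+1)/2) (fun k => 2*k-1) ?_ ?_ ?_ ?_ ?_
  · intro i hi
    simp only [Finset.mem_filter, Finset.mem_range] at hi
    simp only [Finset.mem_Ico]
    show 1 ≤ (i+1)/2 ∧ (i+1)/2 < m+2
    omega
  · intro k hk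
    simp only [Finset.mem_Ico] at hk
    simp only [Finset.mem_filter, Finset.mem_range]
    show 2*k-1 < 2*m+1+1 ∧ (2*k-1) % 2 = 1
    omega
  · intro i hi
    rw [Finset.mem_filter, Finset.mem_range] at hi
    show 2*((i+1)/2)-1 = i
    omega
  · intro k hk
    rw [Finset.mem_Ico] at hk
    show (2*k-1+1)/2 = k
    omega
  · intro i hi
    rw [Finset.mem_filter, Finset.mem_range] at hi
    set k := (i+1)/2 with hk
    have hik : i = 2*k-1 := by omega
    have hk1 : 1 ≤ k := by omega
    have hkm : k ≤ m+1 := by omega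
    rw [PowerSeries.coeff_derivative, coeff_fser, coeff_hser]
    have e1 : i + 1 = 2*k := by omega
    have e2 : (i+1) % 2 = 0 ∧ i+1 ≠ 0 := by omega
    have e3 : (i+1)/2 = k := by omega
    have e4 : 2*m+1-i = 2*m+2-2*k := by omega
    have e5 : (2*m+2-2*k) % 2 = 0 := by omega
    have e6 : (2*m+2-2*k)/2 + 1 = m+2-k := by omega
    simp only [e2, if_true, e3, e4, e5, e6]
    rw [e1]
    have e7 : ((i : ℕ) : R) + 1 = ((2*k : ℕ) : R) := by
      rw [← Nat.cast_add_one]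
      exact_mod_cast congrArg (Nat.cast : ℕ → R) e1
    rw [e7]
    have hnat : Nat.factorial (2*k) = (2*k) * Nat.factorial (2*k-1) := by
      conv_lhs => rw [show 2*k = (2*k-1)+1 by omega]
      rw [Nat.factorial_succ]
      congr 1
      omega
    rw [hnat, Nat.cast_mul]
    have h2k : ((2*k : ℕ) : R) ≠ 0 := Nat.cast_ne_zero.mpr (by omega)
    have hf1 : ((Nat.factorial (2*k-1) : ℕ) : R) ≠ 0 :=
      Nat.cast_ne_zero.mpr (Nat.factorial_ne_zero _)
    have hf2 : ((Nat.factorial (2*m+2-2*k) : ℕ) : R) ≠ 0 :=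
      Nat.cast_ne_zero.mpr (Nat.factorial_ne_zero _)
    push_cast
    push_cast at h2k
    rw [if_pos (by refine ⟨trivial, ?_⟩; omega)]
    have hk0 : ((k : ℕ) : R) ≠ 0 := Nat.cast_ne_zero.mpr (by omega)
    field_simp

lemma B_coeff_iff (m : ℕ) :
    (z (m+2) = ∑ k ∈ Finset.Ico 1 (m+2),
        z k * z (m+2-k) * (shiftedP k)^2 * (Nat.choose (2*(m+2)-3) (2*k-1) : R))
    ↔ PowerSeries.coeff (2*m+1) (d⁄dX R (hser z))
        = PowerSeries.coeff (2*m+1) (d⁄dX R (fser z) * hser z) := by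
  rw [coeff_deriv_hser_odd, coeff_mul_deriv_odd]
  have hfac : ((Nat.factorial (2*m+1) : ℕ) : R) ≠ 0 :=
    Nat.cast_ne_zero.mpr (Nat.factorial_ne_zero _)
  have hsum : ∑ k ∈ Finset.Ico 1 (m+2),
          (shiftedP k)^2 * z k * z (m+2-k)
            / ((Nat.factorial (2*k-1) : R) * (Nat.factorial (2*m+2-2*k) : R))
      = (∑ k ∈ Finset.Ico 1 (m+2),
          z k * z (m+2-k) * (shiftedP k)^2 * (Nat.choose (2*(m+2)-3) (2*k-1) : R))
        / (Nat.factorial (2*m+1) : R) := by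
    rw [Finset.sum_div]
    apply Finset.sum_congr rfl
    intro k hk
    rw [Finset.mem_Ico] at hk
    have e0 : 2*(m+2)-3 = 2*m+1 := by omega
    have e1 : 2*k-1 ≤ 2*m+1 := by omega
    have e2 : 2*m+1-(2*k-1) = 2*m+2-2*k := by omega
    rw [e0, Nat.cast_choose R e1, e2]
    have h1 : ((Nat.factorial (2*k-1) : ℕ) : R) ≠ 0 :=
      Nat.cast_ne_zero.mpr (Nat.factorial_ne_zero _)
    have h2 : ((Nat.factorial (2*m+2-2*k) : ℕ) : R) ≠ 0 :=
      Nat.cast_ne_zero.mpr (Nat.factorial_ne_zero _)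
    field_simp
  rw [hsum]
  constructor
  · intro h; rw [h]
  · intro h
    have := congrArg (fun x => x * ((Nat.factorial (2*m+1) : ℕ) : R)) h
    simpa [div_mul_cancel₀, hfac] using this

lemma B_iff :
    (∀ d : ℕ, 2 ≤ d →
      z d = ∑ k ∈ Finset.Ico 1 d,
        z k * z (d - k) * (shiftedP k) ^ 2 *
          (Nat.choose (2 * d - 3) (2 * k - 1) : RatFunc ℚ))
    ↔ d⁄dX R (hser z) = d⁄dX R (fser z) * hser z := by
  constructor
  · intro hB
    ext n
    by_cases hn : n % 2 = 0
    · rw [coeff_deriv_hser_even z hn, coeff_mul_deriv_even z hn]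
    · have hm : n = 2*(n/2)+1 := by omega
      rw [hm]
      exact (B_coeff_iff z (n/2)).mp (hB (n/2+2) (by omega))
  · intro h d hd
    have hm : d = (d-2)+2 := by omega
    rw [hm]
    apply (B_coeff_iff z (d-2)).mpr
    rw [h]

lemma deriv_Eser : d⁄dX R (Eser z) = d⁄dX R (fser z) * Eser z := by
  ext n
  have key : ∀ k : ℕ, PowerSeries.coeff (n+1) ((fser z)^(k+1)) * (((n:R))+1)
      = (((k:R))+1) * PowerSeries.coeff n ((fser z)^k * d⁄dX R (fser z)) := by
    intro k
    have h1 : PowerSeries.coeff n (d⁄dX R ((fser z)^(k+1)))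
        = PowerSeries.coeff (n+1) ((fser z)^(k+1)) * ((n:R)+1) := by
      rw [PowerSeries.coeff_derivative]
    rw [← h1, Derivation.leibniz_pow]
    simp only [Nat.add_sub_cancel]
    rw [map_nsmul, nsmul_eq_mul]
    simp only [smul_eq_mul]
    push_cast
    ring
  have hL : PowerSeries.coeff n (d⁄dX R (Eser z))
      = ∑ j ∈ Finset.range (n+1),
          PowerSeries.coeff n ((fser z)^j * d⁄dX R (fser z)) / (Nat.factorial j : R) := by
    rw [PowerSeries.coeff_derivative, coeff_Eser, Finset.sum_mul]
    rw [Finset.sum_range_succ']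
    have h0 : PowerSeries.coeff (n+1) ((fser z)^0) / (Nat.factorial 0 : R) * ((n:R)+1) = 0 := by
      simp only [pow_zero]
      rw [PowerSeries.coeff_one]
      simp
    rw [h0, add_zero]
    apply Finset.sum_congr rfl
    intro j _
    rw [div_mul_eq_mul_div, key j]
    rw [Nat.factorial_succ]
    have hj1 : ((j:R)+1) ≠ 0 := by
      have : ((j+1 : ℕ) : R) ≠ 0 := Nat.cast_ne_zero.mpr (by omega)
      push_cast at this; exact this
    have hjf : ((Nat.factorial j : ℕ) : R) ≠ 0 := Nat.cast_ne_zero.mpr (Nat.factorial_ne_zero _)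
    push_cast
    field_simp
  have hR : PowerSeries.coeff n (d⁄dX R (fser z) * Eser z)
      = ∑ j ∈ Finset.range (n+1),
          PowerSeries.coeff n ((fser z)^j * d⁄dX R (fser z)) / (Nat.factorial j : R) := by
    rw [PowerSeries.coeff_mul]
    have hterm : ∀ p ∈ Finset.HasAntidiagonal.antidiagonal n,
        PowerSeries.coeff p.1 (d⁄dX R (fser z)) * PowerSeries.coeff p.2 (Eser z)
        = ∑ j ∈ Finset.range (n+1),
            PowerSeries.coeff p.1 (d⁄dX R (fser z))
              * PowerSeries.coeff p.2 ((fser z)^j) / (Nat.factorial j : R) := by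
      intro p hp
      rw [Finset.HasAntidiagonal.mem_antidiagonal] at hp
      rw [coeff_Eser, Finset.mul_sum]
      rw [← Finset.sum_subset (s₁ := Finset.range (p.2+1)) (s₂ := Finset.range (n+1))]
      · apply Finset.sum_congr rfl
        intro j _
        rw [mul_div_assoc]
      · intro x hx
        rw [Finset.mem_range] at hx ⊢
        omega
      · intro x hx hnx
        rw [Finset.mem_range] at hx hnx
        have : p.2 < 2*x := by omega
        rw [coeff_pow_fser_small z this]
        simp
    rw [Finset.sum_congr rfl hterm, Finset.sum_comm]
    apply Finset.sum_congr rfl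
    intro j _
    rw [mul_comm ((fser z)^j), PowerSeries.coeff_mul, Finset.sum_div]
  rw [hL, hR]

lemma ode_unique (φ g₁ g₂ : PowerSeries R)
    (h1 : d⁄dX R g₁ = φ * g₁) (h2 : d⁄dX R g₂ = φ * g₂)
    (h0 : PowerSeries.constantCoeff g₁ = PowerSeries.constantCoeff g₂) :
    g₁ = g₂ := by
  ext n
  induction n using Nat.strong_induction_on with
  | _ n ih =>
    match n with
    | 0 => simpa [PowerSeries.coeff_zero_eq_constantCoeff] using h0
    | Nat.succ n =>
      have e1 : PowerSeries.coeff n (d⁄dX R g₁) = PowerSeries.coeff n (d⁄dX R g₂) := by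
        rw [h1, h2, PowerSeries.coeff_mul, PowerSeries.coeff_mul]
        apply Finset.sum_congr rfl
        intro p hp
        rw [Finset.HasAntidiagonal.mem_antidiagonal] at hp
        rw [ih p.2 (by omega)]
      rw [PowerSeries.coeff_derivative, PowerSeries.coeff_derivative] at e1
      have hne : ((n:R)+1) ≠ 0 := by
        have : ((n+1 : ℕ) : R) ≠ 0 := Nat.cast_ne_zero.mpr (by omega)
        push_cast at this; exact this
      exact mul_right_cancel₀ hne e1

end PoincareAux


/-- A sequence `z` in `ℚ(t)` with `z 1 = 1` satisfies
`z_{d+1} = Σ_{k≥1} ((2d)!/k!) Σ_{a_1+…+a_k=d, a_i>0} Π_i p_{a_i}²·z_{a_i}/(2a_i)!`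
for all `d ≥ 1` iff it satisfies
`z_d = Σ_{k+l=d, k,l>0} z_k·z_l·p_k²·C(2d−3,2k−1)` for all `d ≥ 2`. -/
theorem poincare_recursions_equivalent (z : ℕ → RatFunc ℚ) (hz1 : z 1 = 1) :
    (∀ d : ℕ, 1 ≤ d →
      z (d + 1) = ∑ k ∈ Finset.Icc 1 d,
        ((Nat.factorial (2 * d) : RatFunc ℚ) / (Nat.factorial k : RatFunc ℚ)) *
          ∑ c ∈ (Finset.Nat.antidiagonalTuple k d).filter (fun c => ∀ i, 0 < c i),
            ∏ i, (shiftedP (c i)) ^ 2 * z (c i) / (Nat.factorial (2 * c i) : RatFunc ℚ))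
    ↔ (∀ d : ℕ, 2 ≤ d →
      z d = ∑ k ∈ Finset.Ico 1 d,
        z k * z (d - k) * (shiftedP k) ^ 2 *
          (Nat.choose (2 * d - 3) (2 * k - 1) : RatFunc ℚ)) := by
  rw [PoincareAux.A_iff z hz1, PoincareAux.B_iff z]
  constructor
  · intro hE
    rw [hE]
    exact PoincareAux.deriv_Eser z
  · intro hD
    refine PoincareAux.ode_unique (PowerSeries.derivative PoincareAux.R (PoincareAux.fser z)) _ _ hD
      (PoincareAux.deriv_Eser z) ?_
    rw [← PowerSeries.coeff_zero_eq_constantCoeff]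
    rw [PoincareAux.coeff_hser, PoincareAux.coeff_Eser]
    norm_num [hz1]
end

section
/- Let N : {1,2,…} → ℚ be a sequence with N_1 = 1. Then N satisfies the recursion N_{d+1} = Σ_{k=1}^{d} ((2d)!/k!) Σ_{a_1+…+a_k = d, a_i > 0} Π_{i=1}^{k} ( a_i² · N_{a_i} / (2a_i)! ) for all d ≥ 1 if and only if it satisfies the recursion N_d = Σ_{k+l=d, k,l>0} N_k · N_l · k² · C(2d−3, 2k−1) for all d ≥ 2. -/
/-!
Put `f = ∑ d² N_d x^d / (2d)!` and `g = ∑ N_{d+1} x^d / (2d)!`. As `f` has no constant term,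
the inner sum of the first recursion is the coefficient of `x^d` in `f^k`, so that recursion says
exactly `exp f = g`. The series `E = exp f` satisfies `E' = f' E`; comparing coefficients of `x^d`
and using `(2d+2)! (i+1) = (d+1) (2i+2)! (2j)! C(2d+1, 2i+1)` for `i + j = d`, once the
coefficients of `E` and `g` agree up to `x^d` the second recursion at `d + 2` says exactly that
they agree at `x^{d+1}`. By induction the second recursion is also equivalent to `exp f = g`.
-/

open Finset PowerSeries
open scoped Nat

namespace PowerSeries

theorem coeff_pow_eq_sum_antidiagonalTuple {R : Type*} [CommSemiring R] (f : R⟦X⟧) (k d : ℕ) :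
    coeff d (f ^ k) = ∑ x ∈ Nat.antidiagonalTuple k d, ∏ i, coeff (x i) f := by
  rw [← Fin.prod_const, coeff_prod]
  exact sum_equiv Finsupp.equivFunOnFinite (by simp [Nat.mem_antidiagonalTuple]) (by simp)

theorem coeff_pow_eq_zero_of_lt {R : Type*} [CommSemiring R] {f : R⟦X⟧}
    (hf : constantCoeff f = 0) {k d : ℕ} (h : d < k) : coeff d (f ^ k) = 0 :=
  X_pow_dvd_iff.mp (pow_dvd_pow_of_dvd (X_dvd_iff.mpr hf) k) d h

variable {A : Type*} [CommRing A] [Algebra ℚ A] {f : A⟦X⟧}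

theorem coeff_exp_subst (hf : constantCoeff f = 0) (d : ℕ) :
    coeff d ((exp A).subst f) =
      ∑ k ∈ range (d + 1), algebraMap ℚ A (1 / k !) * coeff d (f ^ k) := by
  rw [coeff_subst' (HasSubst.of_constantCoeff_zero' hf),
    finsum_eq_sum_of_support_subset (s := range (d + 1))]
  · simp [smul_eq_mul]
  · intro k hk
    by_contra hkd
    simp only [mem_coe, mem_range, not_lt] at hkd
    simp [coeff_pow_eq_zero_of_lt hf (by omega : d < k)] at hk

theorem succ_mul_coeff_exp_subst_succ (hf : constantCoeff f = 0) (d : ℕ) :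
    (d + 1) * coeff (d + 1) ((exp A).subst f) =
      ∑ p ∈ antidiagonal d, (p.1 + 1) * coeff (p.1 + 1) f * coeff p.2 ((exp A).subst f) := by
  rw [mul_comm, ← coeff_derivative, derivative_subst (HasSubst.of_constantCoeff_zero' hf),
    derivative_exp, mul_comm _ (d⁄dX A f), coeff_mul]
  refine sum_congr rfl fun p _ => ?_
  rw [coeff_derivative]
  ring

end PowerSeries

theorem Nat.forall_iff_forall_of_iff_succ {p q : ℕ → Prop} (h0 : p 0)
    (h : ∀ d, (∀ j ≤ d, p j) → (q d ↔ p (d + 1))) : (∀ d, q d) ↔ ∀ d, p d := by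
  refine ⟨fun hq d => ?_, fun hp d => (h d fun j _ => hp j).mpr (hp _)⟩
  induction d using Nat.strong_induction_on with
  | _ d ih =>
    cases d with
    | zero => exact h0
    | succ d => exact (h d fun j hj => ih j (by omega)).mp (hq d)

theorem Nat.two_mul_add_two_factorial_mul_eq (i j : ℕ) :
    (2 * (i + j) + 2)! * (i + 1) =
      (i + j + 1) * (2 * i + 2)! * (2 * j)! * (2 * (i + j) + 1).choose (2 * i + 1) := by
  have h := Nat.add_choose_mul_factorial_mul_factorial (2 * i + 1) (2 * j)
  rw [← Nat.choose_symm_add] at h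
  rw [show 2 * (i + j) + 1 = 2 * i + 1 + 2 * j by ring,
    show 2 * (i + j) + 2 = 2 * i + 1 + 2 * j + 1 by ring, Nat.factorial_succ,
    Nat.factorial_succ (2 * i + 1), ← h]
  ring

namespace GromovWitten

variable (N : ℕ → ℚ)

def ExpRecursion : Prop :=
  ∀ d : ℕ, 1 ≤ d →
    N (d + 1) = ∑ k ∈ Icc 1 d, ((2 * d)! / k ! : ℚ) *
      ∑ c ∈ (Nat.antidiagonalTuple k d).filter (fun c => ∀ i, 0 < c i),
        ∏ i, (c i : ℚ) ^ 2 * N (c i) / (2 * c i)!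

def QuadraticRecursion : Prop :=
  ∀ d : ℕ, 2 ≤ d →
    N d = ∑ k ∈ Ico 1 d, N k * N (d - k) * (k : ℚ) ^ 2 * ((2 * d - 3).choose (2 * k - 1) : ℚ)

noncomputable def tangencySeries : ℚ⟦X⟧ :=
  mk fun d => (d : ℚ) ^ 2 * N d / (2 * d)!

noncomputable def countingSeries : ℚ⟦X⟧ :=
  mk fun d => N (d + 1) / (2 * d)!

theorem constantCoeff_tangencySeries : constantCoeff (tangencySeries N) = 0 := by
  simp [tangencySeries, ← coeff_zero_eq_constantCoeff_apply]

theorem coeff_zero_exp_subst_tangencySeries {N : ℕ → ℚ} (hN1 : N 1 = 1) :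
    coeff 0 ((exp ℚ).subst (tangencySeries N)) = coeff 0 (countingSeries N) := by
  simp [coeff_exp_subst (constantCoeff_tangencySeries N), countingSeries, hN1]

theorem sum_factorial_div_mul_sum_antidiagonalTuple_eq {d : ℕ} (hd : d ≠ 0) :
    ∑ k ∈ Icc 1 d, ((2 * d)! / k ! : ℚ) *
        ∑ c ∈ (Nat.antidiagonalTuple k d).filter (fun c => ∀ i, 0 < c i),
          ∏ i, (c i : ℚ) ^ 2 * N (c i) / (2 * c i)! =
      (2 * d)! * coeff d ((exp ℚ).subst (tangencySeries N)) := by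
  rw [coeff_exp_subst (constantCoeff_tangencySeries N), range_eq_Ico,
    sum_eq_sum_Ico_succ_bot d.succ_pos, zero_add, Nat.succ_eq_add_one, Ico_add_one_right_eq_Icc]
  simp only [pow_zero, coeff_one, if_neg hd, mul_zero, zero_add]
  rw [mul_sum (Icc 1 d)]
  refine sum_congr rfl fun k _ => ?_
  rw [coeff_pow_eq_sum_antidiagonalTuple, sum_filter_of_ne]
  · simp only [tangencySeries, coeff_mk, Algebra.algebraMap_self, RingHom.id_apply]
    ring
  · intro c _ hc i
    by_contra hci
    exact hc (prod_eq_zero (mem_univ i) (by simp [Nat.eq_zero_of_not_pos hci]))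

theorem sum_Ico_mul_choose_eq {d : ℕ}
    (hN : ∀ j ≤ d, coeff j ((exp ℚ).subst (tangencySeries N)) = coeff j (countingSeries N)) :
    ∑ k ∈ Ico 1 (d + 2), N k * N (d + 2 - k) * (k : ℚ) ^ 2 *
        ((2 * (d + 2) - 3).choose (2 * k - 1) : ℚ) =
      (2 * (d + 1))! * coeff (d + 1) ((exp ℚ).subst (tangencySeries N)) := by
  have hd : (d + 1 : ℚ) ≠ 0 := by positivity
  rw [← mul_div_cancel_left₀ (coeff (d + 1) _) hd,
    succ_mul_coeff_exp_subst_succ (constantCoeff_tangencySeries N), mul_div_assoc', mul_sum,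
    sum_div, sum_Ico_eq_sum_range, Nat.sum_antidiagonal_eq_sum_range_succ_mk]
  refine sum_congr rfl fun i _ => ?_
  obtain ⟨j, rfl⟩ : ∃ j, d = i + j := ⟨d - i, by grind⟩
  have h : ((2 * (i + j) + 2)! * (i + 1) : ℚ) =
      (i + j + 1) * (2 * i + 2)! * (2 * j)! * (2 * (i + j) + 1).choose (2 * i + 1) := by
    exact_mod_cast Nat.two_mul_add_two_factorial_mul_eq i j
  rw [show i + j - i = j by omega, hN j (by omega), countingSeries, tangencySeries, coeff_mk,
    coeff_mk, show i + j + 2 - (1 + i) = j + 1 by omega,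
    show 2 * (i + j + 2) - 3 = 2 * (i + j) + 1 by omega, show 2 * (1 + i) - 1 = 2 * i + 1 by omega,
    show 2 * (i + j + 1) = 2 * (i + j) + 2 by ring, show 2 * (i + 1) = 2 * i + 2 by ring,
    add_comm 1 i, eq_div_iff hd]
  field_simp
  push_cast at h ⊢
  linear_combination -(N (i + 1) * N (j + 1)) * h

theorem expRecursion_iff {N : ℕ → ℚ} (hN1 : N 1 = 1) :
    ExpRecursion N ↔ (exp ℚ).subst (tangencySeries N) = countingSeries N := by
  have step : ∀ d ≠ 0, (N (d + 1) = ∑ k ∈ Icc 1 d, ((2 * d)! / k ! : ℚ) *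
      ∑ c ∈ (Nat.antidiagonalTuple k d).filter (fun c => ∀ i, 0 < c i),
        ∏ i, (c i : ℚ) ^ 2 * N (c i) / (2 * c i)!) ↔
      coeff d ((exp ℚ).subst (tangencySeries N)) = coeff d (countingSeries N) := fun d hd => by
    rw [sum_factorial_div_mul_sum_antidiagonalTuple_eq N hd, countingSeries, coeff_mk,
      eq_div_iff (by positivity), mul_comm, eq_comm]
  rw [ExpRecursion, PowerSeries.ext_iff]
  refine ⟨fun hA d => ?_, fun h d hd => (step d (by omega)).mpr (h d)⟩
  rcases d with _ | d
  · exact coeff_zero_exp_subst_tangencySeries hN1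
  · exact (step (d + 1) d.succ_ne_zero).mp (hA (d + 1) (by omega))

theorem quadraticRecursion_iff {N : ℕ → ℚ} (hN1 : N 1 = 1) :
    QuadraticRecursion N ↔ (exp ℚ).subst (tangencySeries N) = countingSeries N := by
  have shift : QuadraticRecursion N ↔ ∀ d, N (d + 2) = ∑ k ∈ Ico 1 (d + 2),
      N k * N (d + 2 - k) * (k : ℚ) ^ 2 * ((2 * (d + 2) - 3).choose (2 * k - 1) : ℚ) :=
    ⟨fun h d => h (d + 2) (by omega), fun h d hd => by
      obtain ⟨d, rfl⟩ := Nat.exists_eq_add_of_le' hd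
      exact h d⟩
  rw [shift, PowerSeries.ext_iff]
  refine Nat.forall_iff_forall_of_iff_succ (coeff_zero_exp_subst_tangencySeries hN1) fun d hd => ?_
  rw [sum_Ico_mul_choose_eq N hd, countingSeries, coeff_mk, eq_div_iff (by positivity), mul_comm,
    eq_comm]

end GromovWitten

/-- A sequence `N` in `ℚ` with `N 1 = 1` satisfies
`N_{d+1} = Σ_{k=1}^d ((2d)!/k!) Σ_{a_1+…+a_k=d, a_i>0} Π_i a_i²·N_{a_i}/(2a_i)!`
for all `d ≥ 1` iff it satisfies
`N_d = Σ_{k+l=d, k,l>0} N_k·N_l·k²·C(2d−3,2k−1)` for all `d ≥ 2`. -/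
theorem gw_recursions_equivalent (N : ℕ → ℚ) (hN1 : N 1 = 1) :
    (∀ d : ℕ, 1 ≤ d →
      N (d + 1) = ∑ k ∈ Finset.Icc 1 d,
        ((Nat.factorial (2 * d) : ℚ) / (Nat.factorial k : ℚ)) *
          ∑ c ∈ (Finset.Nat.antidiagonalTuple k d).filter (fun c => ∀ i, 0 < c i),
            ∏ i, ((c i : ℚ)) ^ 2 * N (c i) / (Nat.factorial (2 * c i) : ℚ))
    ↔ (∀ d : ℕ, 2 ≤ d →
      N d = ∑ k ∈ Finset.Ico 1 d,
        N k * N (d - k) * (k : ℚ) ^ 2 *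
          (Nat.choose (2 * d - 3) (2 * k - 1) : ℚ)) :=
  (GromovWitten.expRecursion_iff hN1).trans (GromovWitten.quadraticRecursion_iff hN1).symm
end

section
/- Let Φ ∈ ℚ[[x]] be the formal power series Φ(x) = exp( Σ_{l≥1} ((−1)^{l−1} · l^{2l−1} / (2l)!) · x^{2l} ), and let y ∈ ℚ[[x]] be a power series with zero constant coefficient satisfying the functional equation y = x·Φ(y), where Φ(y) denotes substitution of y into Φ. Then for every d ≥ 1, the coefficient of x^{2d+1} in y equals (1/(2d+1)) · Σ_{k=1}^{d} ((−1)^{d−k} (2d+1)^k / k!) · Σ_{a_1+…+a_k = d, a_i > 0} Π_{i=1}^{k} ( a_i^{2a_i−1} / (2a_i)! ). -/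
open Finset PowerSeries

/-- Composition `f(g(x))` of formal power series; this is the correct notion of
substitution whenever `g` has zero constant coefficient, since then
`coeff n (g ^ s) = 0` for `s > n`. -/
noncomputable def psComp (f g : PowerSeries ℚ) : PowerSeries ℚ :=
  PowerSeries.mk fun n => ∑ s ∈ Finset.range (n + 1),
    (PowerSeries.coeff s f) * (PowerSeries.coeff n (g ^ s))

/-- The series `Σ_{l≥1} ((−1)^{l−1}·l^{2l−1}/(2l)!)·x^{2l}`: the coefficient of `x^n`
for `n = 2l > 0` even is `(−1)^{n/2−1}·(n/2)^{n−1}/n!`, and `0` otherwise. -/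
noncomputable def treeWeightSeries : PowerSeries ℚ :=
  PowerSeries.mk fun n =>
    if n ≠ 0 ∧ n % 2 = 0 then
      ((-1 : ℚ)) ^ (n / 2 - 1) * ((n / 2 : ℕ) : ℚ) ^ (n - 1) / (Nat.factorial n : ℚ)
    else 0

/-- `Φ(x) = exp( Σ_{l≥1} ((−1)^{l−1}·l^{2l−1}/(2l)!)·x^{2l} )`. -/
noncomputable def treePhi : PowerSeries ℚ :=
  psComp (PowerSeries.exp ℚ) treeWeightSeries

variable {f g h : PowerSeries ℚ}

lemma coeff_psComp (f : PowerSeries ℚ) (n : ℕ) :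
    coeff n (psComp f g) = ∑ s ∈ Finset.range (n + 1),
      (coeff s f) * (coeff n (g ^ s)) := by
  simp [psComp]

lemma coeff_pow_eq_zero (hg : constantCoeff g = 0) {n s : ℕ} (h : n < s) :
    coeff n (g ^ s) = 0 := by
  have hd : (X : ℚ⟦X⟧) ^ s ∣ g ^ s := pow_dvd_pow_of_dvd (X_dvd_iff.mpr hg) s
  exact X_pow_dvd_iff.mp hd n h

lemma coeff_psComp_eq_aeval (hg : constantCoeff g = 0) (f : PowerSeries ℚ) {n N : ℕ}
    (hn : n < N) :
    coeff n (psComp f g) = coeff n (Polynomial.aeval g (trunc N f)) := by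
  have hdeg : (trunc N f).natDegree < N := by
    by_cases h0 : trunc N f = 0
    · simpa [h0] using Nat.pos_of_ne_zero (by omega)
    · exact (Polynomial.natDegree_lt_iff_degree_lt h0).mpr (degree_trunc_lt f N)
  rw [Polynomial.aeval_eq_sum_range' hdeg, coeff_psComp]
  rw [map_sum]
  have : ∀ i ∈ Finset.range N,
      coeff n ((trunc N f).coeff i • g ^ i) = coeff i f * coeff n (g ^ i) := by
    intro i hi
    rw [LinearMap.map_smul, smul_eq_mul, coeff_trunc, if_pos (Finset.mem_range.mp hi)]
  rw [Finset.sum_congr rfl this]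
  exact Finset.sum_subset (Finset.range_subset_range.mpr hn) (fun s hs hns => by
    rw [coeff_pow_eq_zero hg (by simp at hns ⊢; omega), mul_zero])

lemma psComp_add (f h : PowerSeries ℚ) : psComp (f + h) g = psComp f g + psComp h g := by
  ext n
  simp [coeff_psComp, add_mul, Finset.sum_add_distrib]

lemma psComp_zero : psComp 0 g = 0 := by
  ext n; simp [coeff_psComp]

lemma psComp_C (a : ℚ) : psComp (PowerSeries.C a) g = PowerSeries.C a := by
  ext n
  rw [coeff_psComp]
  simp only [PowerSeries.coeff_C, ite_mul, zero_mul]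
  rw [Finset.sum_ite_eq' (Finset.range (n+1)) 0]
  simp [PowerSeries.coeff_one, PowerSeries.coeff_C]

lemma psComp_one : psComp 1 g = 1 := by
  simpa using psComp_C (g := g) 1

lemma psComp_X (hg : constantCoeff g = 0) : psComp X g = g := by
  ext n
  rw [coeff_psComp]
  simp only [PowerSeries.coeff_X, ite_mul, zero_mul, one_mul]
  rw [Finset.sum_ite_eq' (Finset.range (n+1)) 1]
  split_ifs with h1
  · rw [pow_one]
  · have : n = 0 := by simp at h1; omega
    subst this
    simpa using hg.symm

lemma aeval_coeff_eq_zero (hg : constantCoeff g = 0) {p : Polynomial ℚ} {N : ℕ}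
    (hp : ∀ j < N, p.coeff j = 0) {n : ℕ} (hn : n < N) :
    coeff n (Polynomial.aeval g p) = 0 := by
  rw [Polynomial.aeval_eq_sum_range, map_sum]
  apply Finset.sum_eq_zero
  intro i _
  rw [LinearMap.map_smul, smul_eq_mul]
  by_cases hi : i < N
  · rw [hp i hi, zero_mul]
  · rw [coeff_pow_eq_zero hg (by omega), mul_zero]

lemma psComp_mul (hg : constantCoeff g = 0) (f h : PowerSeries ℚ) :
    psComp (f * h) g = psComp f g * psComp h g := by
  ext n
  set N := n + 1 with hN
  have hn : n < N := Nat.lt_succ_self n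
  rw [PowerSeries.coeff_mul]
  have step1 : ∑ p ∈ Finset.HasAntidiagonal.antidiagonal n, coeff p.1 (psComp f g) * coeff p.2 (psComp h g)
      = ∑ p ∈ Finset.HasAntidiagonal.antidiagonal n,
        coeff p.1 (Polynomial.aeval g (trunc N f)) * coeff p.2 (Polynomial.aeval g (trunc N h)) := by
    apply Finset.sum_congr rfl
    intro p hp
    have hp' := Finset.HasAntidiagonal.mem_antidiagonal.mp hp
    rw [coeff_psComp_eq_aeval hg f (N := N) (by omega), coeff_psComp_eq_aeval hg h (N := N) (by omega)]
  rw [step1, ← PowerSeries.coeff_mul, ← map_mul]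
  have hdiff : ∀ j < N, (trunc N f * trunc N h - trunc N (f * h)).coeff j = 0 := by
    intro j hj
    rw [Polynomial.coeff_sub]
    have h1 : coeff j (f * h) = ((trunc N f) * (trunc N h)).coeff j := by
      rw [coeff_mul_eq_coeff_trunc_mul_trunc f h hj, ← Polynomial.coe_mul, ← Polynomial.coeff_coe]
    have h2 : (trunc N (f * h)).coeff j = coeff j (f * h) := by
      rw [coeff_trunc, if_pos hj]
    rw [h2, ← h1, sub_self]
  have hz := aeval_coeff_eq_zero hg hdiff hn
  rw [map_sub, map_sub, sub_eq_zero] at hz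
  rw [coeff_psComp_eq_aeval hg (f*h) hn, ← hz]

lemma psComp_pow (hg : constantCoeff g = 0) (f : PowerSeries ℚ) (k : ℕ) :
    psComp (f ^ k) g = (psComp f g) ^ k := by
  induction k with
  | zero => simpa using psComp_one
  | succ k ih => rw [pow_succ, psComp_mul hg, ih, pow_succ]

lemma psComp_sum {ι : Type*} (s : Finset ι) (F : ι → PowerSeries ℚ) :
    psComp (∑ i ∈ s, F i) g = ∑ i ∈ s, psComp (F i) g := by
  induction s using Finset.cons_induction with
  | empty => simpa using psComp_zero
  | cons a s ha ih => rw [Finset.sum_cons, psComp_add, ih, Finset.sum_cons]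

lemma constantCoeff_psComp (f : PowerSeries ℚ) :
    constantCoeff (psComp f g) = constantCoeff f := by
  rw [← PowerSeries.coeff_zero_eq_constantCoeff_apply, coeff_psComp]
  simp

lemma residue_aux (u : ℚ⟦X⟧) (hu : constantCoeff u ≠ 0) (j : ℕ) :
    coeff j ((u⁻¹) ^ (j + 1) * d⁄dX ℚ (X * u)) = if j = 0 then 1 else 0 := by
  have hder : d⁄dX ℚ (X * u) = u + X * d⁄dX ℚ u := by
    rw [Derivation.leibniz, smul_eq_mul, smul_eq_mul, derivative_X, mul_one, add_comm]
  have hui : u⁻¹ * u = 1 := PowerSeries.inv_mul_cancel u hu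
  have hsplit : (u⁻¹) ^ (j + 1) * d⁄dX ℚ (X * u)
      = (u⁻¹) ^ j + X * ((u⁻¹) ^ (j + 1) * d⁄dX ℚ u) := by
    rw [hder]
    calc (u⁻¹) ^ (j + 1) * (u + X * d⁄dX ℚ u)
        = (u⁻¹) ^ j * (u⁻¹ * u) + X * ((u⁻¹) ^ (j + 1) * d⁄dX ℚ u) := by ring
      _ = (u⁻¹) ^ j + X * ((u⁻¹) ^ (j + 1) * d⁄dX ℚ u) := by rw [hui, mul_one]
  rw [hsplit, map_add]
  cases j with
  | zero => simp
  | succ m =>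
    rw [if_neg (Nat.succ_ne_zero m), coeff_succ_X_mul]
    have hpowder : d⁄dX ℚ ((u⁻¹) ^ (m + 1))
        = -(((m + 1 : ℕ) : ℚ⟦X⟧)) * ((u⁻¹) ^ (m + 2) * d⁄dX ℚ u) := by
      rw [Derivation.leibniz_pow, derivative_inv', Nat.add_sub_cancel, nsmul_eq_mul, smul_eq_mul]
      ring
    have hco : coeff m (d⁄dX ℚ ((u⁻¹) ^ (m + 1))) = coeff (m + 1) ((u⁻¹) ^ (m + 1)) * (m + 1) :=
      coeff_derivative _ m
    rw [hpowder, neg_mul, map_neg, ← nsmul_eq_mul, map_nsmul, nsmul_eq_mul] at hco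
    have hm1 : ((m : ℚ) + 1) ≠ 0 := by positivity
    have h2 : coeff m ((u⁻¹) ^ (m + 2) * d⁄dX ℚ u) = -coeff (m + 1) ((u⁻¹) ^ (m + 1)) := by
      apply mul_left_cancel₀ hm1
      push_cast at hco ⊢
      linear_combination -hco
    rw [h2]
    ring

lemma lagrange_main {u B : ℚ⟦X⟧} {n : ℕ} (hu : constantCoeff u ≠ 0) (hn : 0 < n)
    (hB : psComp B (X * u) = u ^ n) :
    (n : ℚ) * coeff n (X * u) = coeff (n - 1) B := by
  set y : ℚ⟦X⟧ := X * u with hy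
  have hy0 : constantCoeff y = 0 := by simp [hy]
  set P : ℚ⟦X⟧ := ∑ j ∈ Finset.range n, PowerSeries.C (coeff j B) * X ^ j with hP
  have hPc : ∀ m, m < n → coeff m P = coeff m B := by
    intro m hm
    rw [hP, map_sum]
    have : ∀ j ∈ Finset.range n, coeff m (PowerSeries.C (coeff j B) * X ^ j)
        = if j = m then coeff j B else 0 := by
      intro j _
      rw [coeff_C_mul, coeff_X_pow]
      by_cases h : m = j
      · subst h; rw [if_pos rfl, if_pos rfl, mul_one]
      · rw [if_neg (by omega), if_neg (fun hh => h hh.symm), mul_zero]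
    rw [Finset.sum_congr rfl this, Finset.sum_ite_eq' (Finset.range n) m, if_pos (Finset.mem_range.mpr hm)]
  obtain ⟨Q, hQ⟩ : (X : ℚ⟦X⟧) ^ n ∣ (B - P) := by
    rw [X_pow_dvd_iff]
    intro m hm
    rw [map_sub, hPc m hm, sub_self]
  have hBPQ : B = P + X ^ n * Q := by rw [← hQ]; ring
  have hcompP : psComp P y = ∑ j ∈ Finset.range n, PowerSeries.C (coeff j B) * y ^ j := by
    rw [hP, psComp_sum]
    apply Finset.sum_congr rfl
    intro j _
    rw [psComp_mul hy0, psComp_C, psComp_pow hy0, psComp_X hy0]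
  have hkey : u ^ n = (∑ j ∈ Finset.range n, PowerSeries.C (coeff j B) * y ^ j)
      + y ^ n * psComp Q y := by
    rw [← hB, hBPQ, psComp_add, psComp_mul hy0, hcompP, psComp_pow hy0, psComp_X hy0, ← hBPQ]
  have hinv : (u⁻¹) ^ n * u ^ n = 1 := by
    rw [← mul_pow, PowerSeries.inv_mul_cancel u hu, one_pow]
  -- main computation
  have hyd : d⁄dX ℚ y = (u⁻¹) ^ n * u ^ n * d⁄dX ℚ y := by rw [hinv, one_mul]
  have expand : d⁄dX ℚ y
      = (∑ j ∈ Finset.range n, PowerSeries.C (coeff j B) * ((u⁻¹) ^ n * y ^ j * d⁄dX ℚ y))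
        + X ^ n * (psComp Q y * d⁄dX ℚ y) := by
    calc d⁄dX ℚ y = (u⁻¹) ^ n * u ^ n * d⁄dX ℚ y := hyd
      _ = (u⁻¹) ^ n * ((∑ j ∈ Finset.range n, PowerSeries.C (coeff j B) * y ^ j)
            + y ^ n * psComp Q y) * d⁄dX ℚ y := by rw [← hkey]
      _ = (∑ j ∈ Finset.range n, PowerSeries.C (coeff j B) * ((u⁻¹) ^ n * y ^ j * d⁄dX ℚ y))
            + ((u⁻¹) ^ n * y ^ n) * (psComp Q y * d⁄dX ℚ y) := by
          rw [mul_add, add_mul, Finset.mul_sum, Finset.sum_mul]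
          congr 1
          · exact Finset.sum_congr rfl fun j _ => by ring
          · ring
      _ = _ := by
          rw [show (u⁻¹) ^ n * y ^ n = X ^ n by rw [hy, mul_pow, ← mul_assoc, mul_comm ((u⁻¹)^n), mul_assoc, hinv, mul_one]]
  -- coefficient of n-1
  have hterm : ∀ j ∈ Finset.range n,
      coeff (n-1) (PowerSeries.C (coeff j B) * ((u⁻¹) ^ n * y ^ j * d⁄dX ℚ y))
      = if j = n - 1 then coeff (n-1) B else 0 := by
    intro j hj
    have hjn : j < n := Finset.mem_range.mp hj
    set k := n - j with hk
    have hkj : j + k = n := by omega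
    have hk1 : 1 ≤ k := by omega
    have hinvj : (u⁻¹) ^ j * u ^ j = 1 := by
      rw [← mul_pow, PowerSeries.inv_mul_cancel u hu, one_pow]
    have harr : (u⁻¹) ^ n * y ^ j * d⁄dX ℚ y = X ^ j * ((u⁻¹) ^ k * d⁄dX ℚ y) := by
      calc (u⁻¹) ^ n * y ^ j * d⁄dX ℚ y
          = ((u⁻¹) ^ j * u ^ j) * (X ^ j * ((u⁻¹) ^ k * d⁄dX ℚ y)) := by
            rw [hy, mul_pow, ← hkj, pow_add]; ring
        _ = X ^ j * ((u⁻¹) ^ k * d⁄dX ℚ y) := by rw [hinvj, one_mul]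
    rw [coeff_C_mul, harr]
    have hidx : n - 1 = (k - 1) + j := by omega
    rw [hidx, show (X:ℚ⟦X⟧) ^ j * ((u⁻¹) ^ k * d⁄dX ℚ y) = (u⁻¹) ^ k * d⁄dX ℚ y * X ^ j by ring,
      PowerSeries.coeff_mul_X_pow]
    have := residue_aux u hu (k - 1)
    rw [show k - 1 + 1 = k by omega, ← hy] at this
    rw [this]
    by_cases h1 : k = 1
    · simp [show k - 1 + j = j by omega, show k - 1 = 0 by omega]
    · simp [show k - 1 ≠ 0 by omega, show j ≠ k - 1 + j by omega]
  have : coeff (n-1) (d⁄dX ℚ y) = coeff (n-1) B := by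
    rw [expand, map_add, map_sum, Finset.sum_congr rfl hterm,
      Finset.sum_ite_eq' (Finset.range n) (n-1), if_pos (Finset.mem_range.mpr (by omega))]
    have hz : coeff (n-1) (X ^ n * (psComp Q y * d⁄dX ℚ y)) = 0 := by
      rw [PowerSeries.coeff_X_pow_mul', if_neg (by omega)]
    rw [hz, add_zero]
  rw [← this, coeff_derivative, show n - 1 + 1 = n by omega]
  have : ((n - 1 : ℕ) : ℚ) + 1 = (n : ℚ) := by
    rw [Nat.cast_sub hn]; ring
  rw [this]
  ring

lemma sum_finsuppAntidiag_tuple (k m : ℕ) (F : ℕ → ℚ) :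
    ∑ l ∈ Finset.finsuppAntidiag (Finset.range k) m, ∏ i ∈ Finset.range k, F (l i)
      = ∑ c ∈ Finset.Nat.antidiagonalTuple k m, ∏ i, F (c i) := by
  apply Finset.sum_nbij' (i := fun (l : ℕ →₀ ℕ) => fun i : Fin k => l i.val)
    (j := fun (c : Fin k → ℕ) =>
      Finsupp.onFinset (Finset.range k) (fun a => if h : a < k then c ⟨a, h⟩ else 0)
        (fun a ha => Finset.mem_range.mpr (by by_contra hc; simp [dif_neg hc] at ha)))
  · intro l hl
    obtain ⟨hsum, hsupp⟩ := Finset.mem_finsuppAntidiag.mp hl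
    rw [Finset.Nat.mem_antidiagonalTuple]
    rw [Fin.sum_univ_eq_sum_range (fun a => l a)]
    exact hsum
  · intro c hc
    rw [Finset.Nat.mem_antidiagonalTuple] at hc
    rw [Finset.mem_finsuppAntidiag]
    constructor
    · rw [show (Finset.range k).sum (Finsupp.onFinset (Finset.range k)
          (fun a => if h : a < k then c ⟨a, h⟩ else 0) _)
          = ∑ a ∈ Finset.range k, (if h : a < k then c ⟨a, h⟩ else 0) from rfl]
      rw [← Fin.sum_univ_eq_sum_range (fun a => if h : a < k then c ⟨a, h⟩ else 0) k]
      rw [← hc]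
      exact Finset.sum_congr rfl (fun i _ => by simp)
    · exact Finsupp.support_onFinset_subset
  · intro l hl
    obtain ⟨hsum, hsupp⟩ := Finset.mem_finsuppAntidiag.mp hl
    ext a
    simp only [Finsupp.onFinset_apply]
    by_cases h : a < k
    · simp [dif_pos h]
    · rw [dif_neg h]
      by_contra hne
      have : a ∈ l.support := Finsupp.mem_support_iff.mpr (fun hh => hne hh.symm)
      exact h (Finset.mem_range.mp (hsupp this))
  · intro c hc
    funext i
    simp
  · intro l hl
    rw [← Fin.prod_univ_eq_prod_range (fun a => F (l a)) k]

lemma coeff_pow_tuple (V : ℚ⟦X⟧) (k m : ℕ) :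
    coeff m (V ^ k) = ∑ c ∈ Finset.Nat.antidiagonalTuple k m, ∏ i, coeff (c i) V := by
  rw [PowerSeries.coeff_pow]
  exact sum_finsuppAntidiag_tuple k m (fun v => coeff v V)

lemma coeff_treeWeight_even (a : ℕ) (ha : 0 < a) :
    PowerSeries.coeff (2 * a) treeWeightSeries
      = (-1 : ℚ) ^ (a - 1) * ((a : ℚ) ^ (2 * a - 1) / (Nat.factorial (2 * a) : ℚ)) := by
  rw [treeWeightSeries, coeff_mk, if_pos ⟨by omega, by omega⟩,
    show 2 * a / 2 = a by omega]
  ring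

lemma coeff_treeWeight_ne {n : ℕ} (h : ¬(n ≠ 0 ∧ n % 2 = 0)) :
    PowerSeries.coeff n treeWeightSeries = 0 := by
  rw [treeWeightSeries, coeff_mk, if_neg h]

lemma coeff_W_pow (k d : ℕ) :
    coeff (2 * d) (treeWeightSeries ^ k)
      = ∑ c ∈ (Finset.Nat.antidiagonalTuple k d).filter (fun c => ∀ i, 0 < c i),
          ∏ i, coeff (2 * c i) treeWeightSeries := by
  classical
  rw [coeff_pow_tuple]
  rw [← Finset.sum_filter_of_ne (p := fun c : Fin k → ℕ => ∀ i, c i ≠ 0 ∧ c i % 2 = 0)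
    (fun c _ hne i => by
      by_contra hcond
      exact hne (Finset.prod_eq_zero (Finset.mem_univ i) (coeff_treeWeight_ne hcond)))]
  apply Finset.sum_nbij' (i := fun (c : Fin k → ℕ) => fun i => c i / 2)
    (j := fun (c : Fin k → ℕ) => fun i => 2 * c i)
  · intro c hc
    simp only [Finset.mem_filter, Finset.Nat.mem_antidiagonalTuple] at hc ⊢
    obtain ⟨hsum, hcond⟩ := hc
    constructor
    · have h2 : 2 * ∑ i, c i / 2 = 2 * d := by
        rw [Finset.mul_sum, ← hsum]
        exact Finset.sum_congr rfl fun i _ => by have := hcond i; omega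
      omega
    · intro i; have := hcond i; omega
  · intro c hc
    simp only [Finset.mem_filter, Finset.Nat.mem_antidiagonalTuple] at hc ⊢
    obtain ⟨hsum, hcond⟩ := hc
    refine ⟨?_, fun i => ⟨by have := hcond i; omega, by omega⟩⟩
    rw [← Finset.mul_sum, hsum]
  · intro c hc
    simp only [Finset.mem_filter] at hc
    funext i
    have := hc.2 i
    simp only []
    omega
  · intro c hc
    funext i
    simp only []
    omega
  · intro c hc
    simp only [Finset.mem_filter] at hc
    exact Finset.prod_congr rfl fun i _ => by
      rw [show 2 * (c i / 2) = c i from by have := hc.2 i; omega]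

lemma prod_treeWeight (k d : ℕ) (c : Fin k → ℕ) (hpos : ∀ i, 0 < c i) (hsum : ∑ i, c i = d) :
    ∏ i, coeff (2 * c i) treeWeightSeries
      = (-1 : ℚ) ^ (d - k) * ∏ i, ((c i : ℚ)) ^ (2 * c i - 1) / (Nat.factorial (2 * c i) : ℚ) := by
  rw [Finset.prod_congr rfl (fun i _ => coeff_treeWeight_even (c i) (hpos i)),
    Finset.prod_mul_distrib, Finset.prod_pow_eq_pow_sum]
  congr 1
  have h1 : (∑ i : Fin k, (c i - 1)) + k = d := by
    have e1 : ∑ i : Fin k, (c i - 1 + 1) = ∑ i, c i :=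
      Finset.sum_congr rfl fun i _ => by have := hpos i; omega
    rw [Finset.sum_add_distrib, Finset.sum_const, Finset.card_univ, Fintype.card_fin,
      smul_eq_mul, mul_one, hsum] at e1
    exact e1
  rw [show d - k = ∑ i : Fin k, (c i - 1) by omega]

/-- If `y ∈ ℚ[[x]]` has zero constant coefficient and satisfies `y = x·Φ(y)`, then for
all `d ≥ 1` the coefficient of `x^{2d+1}` in `y` equals
`(1/(2d+1))·Σ_{k=1}^d ((−1)^{d−k}(2d+1)^k/k!)·Σ_{a_1+…+a_k=d, a_i>0} Π_i a_i^{2a_i−1}/(2a_i)!`. -/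
theorem coeff_tree_generating_function (y : PowerSeries ℚ)
    (hy0 : PowerSeries.constantCoeff y = 0)
    (hy : y = PowerSeries.X * psComp treePhi y) :
    ∀ d : ℕ, 1 ≤ d →
      PowerSeries.coeff (2 * d + 1) y =
        (1 / ((2 * d + 1 : ℕ) : ℚ)) * ∑ k ∈ Finset.Icc 1 d,
          ((-1 : ℚ)) ^ (d - k) * ((2 * d + 1 : ℕ) : ℚ) ^ k / (Nat.factorial k : ℚ) *
            ∑ c ∈ (Finset.Nat.antidiagonalTuple k d).filter (fun c => ∀ i, 0 < c i),
              ∏ i, ((c i : ℚ)) ^ (2 * c i - 1) / (Nat.factorial (2 * c i) : ℚ) := by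
  intro d hd
  set n : ℕ := 2 * d + 1 with hn
  set u : ℚ⟦X⟧ := psComp treePhi y with hu
  have hW0 : constantCoeff treeWeightSeries = 0 := by
    rw [← coeff_zero_eq_constantCoeff_apply, treeWeightSeries, coeff_mk, if_neg (by simp)]
  have hΦ0 : constantCoeff treePhi = 1 := by
    rw [treePhi, constantCoeff_psComp, PowerSeries.constantCoeff_exp]
  have hu0 : constantCoeff u ≠ 0 := by
    rw [hu, constantCoeff_psComp, hΦ0]; norm_num
  have hB : psComp (treePhi ^ n) (X * u) = u ^ n := by
    rw [← hy, psComp_pow hy0, hu]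
  have hlag := lagrange_main hu0 (by omega : 0 < n) hB
  rw [← hy, show n - 1 = 2 * d by omega] at hlag
  have hnne : ((n : ℕ) : ℚ) ≠ 0 := by
    rw [hn]; push_cast; positivity
  have hPhiPow : treePhi ^ n
      = psComp (PowerSeries.rescale (n : ℚ) (PowerSeries.exp ℚ)) treeWeightSeries := by
    rw [treePhi, ← psComp_pow hW0, PowerSeries.exp_pow_eq_rescale_exp]
  have hWs : ∀ s : ℕ, coeff (2 * d) (treeWeightSeries ^ s)
      = (-1 : ℚ) ^ (d - s) * ∑ c ∈ (Finset.Nat.antidiagonalTuple s d).filter (fun c => ∀ i, 0 < c i),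
          ∏ i, ((c i : ℚ)) ^ (2 * c i - 1) / (Nat.factorial (2 * c i) : ℚ) := by
    intro s
    rw [coeff_W_pow, Finset.mul_sum]
    apply Finset.sum_congr rfl
    intro c hc
    simp only [Finset.mem_filter, Finset.Nat.mem_antidiagonalTuple] at hc
    rw [prod_treeWeight s d c hc.2 hc.1]
  have hcoeffB : coeff (2 * d) (treePhi ^ n)
      = ∑ s ∈ Finset.range (2 * d + 1), ((n : ℚ) ^ s * (1 / (Nat.factorial s : ℚ)))
          * ((-1 : ℚ) ^ (d - s) * ∑ c ∈ (Finset.Nat.antidiagonalTuple s d).filter (fun c => ∀ i, 0 < c i),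
              ∏ i, ((c i : ℚ)) ^ (2 * c i - 1) / (Nat.factorial (2 * c i) : ℚ)) := by
    rw [hPhiPow, coeff_psComp]
    apply Finset.sum_congr rfl
    intro s _
    rw [PowerSeries.coeff_rescale, PowerSeries.coeff_exp, hWs s]
    norm_num
  have hempty : ∀ s ∈ Finset.range (2 * d + 1), s ∉ Finset.Icc 1 d →
      ((n : ℚ) ^ s * (1 / (Nat.factorial s : ℚ)))
          * ((-1 : ℚ) ^ (d - s) * ∑ c ∈ (Finset.Nat.antidiagonalTuple s d).filter (fun c => ∀ i, 0 < c i),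
              ∏ i, ((c i : ℚ)) ^ (2 * c i - 1) / (Nat.factorial (2 * c i) : ℚ)) = 0 := by
    intro s _ hs
    have hS : ∑ c ∈ (Finset.Nat.antidiagonalTuple s d).filter (fun c => ∀ i, 0 < c i),
        ∏ i, ((c i : ℚ)) ^ (2 * c i - 1) / (Nat.factorial (2 * c i) : ℚ) = 0 := by
      apply Finset.sum_eq_zero
      intro c hc
      exfalso
      simp only [Finset.mem_filter, Finset.Nat.mem_antidiagonalTuple] at hc
      obtain ⟨hsum, hpos⟩ := hc
      have hge : s ≤ ∑ i, c i := by
        calc s = ∑ _i : Fin s, 1 := by simp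
          _ ≤ ∑ i, c i := Finset.sum_le_sum fun i _ => hpos i
      rcases Nat.eq_zero_or_pos s with rfl | hspos
      · simp only [Finset.univ_eq_empty, Finset.sum_empty] at hsum
        omega
      · have hds : d < s := by
          by_contra hle
          exact hs (Finset.mem_Icc.mpr ⟨hspos, by omega⟩)
        omega
    rw [hS, mul_zero, mul_zero]
  have hsub : Finset.Icc 1 d ⊆ Finset.range (2 * d + 1) := by
    intro s hs
    simp only [Finset.mem_Icc] at hs
    simp only [Finset.mem_range]
    omega
  have hmain : coeff (2 * d) (treePhi ^ n)
      = ∑ k ∈ Finset.Icc 1 d,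
          ((-1 : ℚ)) ^ (d - k) * ((n : ℕ) : ℚ) ^ k / (Nat.factorial k : ℚ) *
            ∑ c ∈ (Finset.Nat.antidiagonalTuple k d).filter (fun c => ∀ i, 0 < c i),
              ∏ i, ((c i : ℚ)) ^ (2 * c i - 1) / (Nat.factorial (2 * c i) : ℚ) := by
    rw [hcoeffB, ← Finset.sum_subset hsub hempty]
    apply Finset.sum_congr rfl
    intro s _
    ring
  have goal1 : coeff n y = (1 / ((n : ℕ) : ℚ)) * coeff (2 * d) (treePhi ^ n) := by
    rw [← hlag]
    field_simp
  rw [hn] at goal1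
  rw [goal1, hmain, hn]
end

section
/- Work in ℚ(t) and let p_k = ((−t)^k − (−t)^{−k}) / ((−t) − (−t)^{−1}) for k ≥ 1. Let σ : ℚ(t) → ℚ(t) be the field automorphism determined by σ(t) = t^{−1}. Define z : {1,2,…} → ℚ(t) recursively by z_1 = 1 and z_{d+1} = Σ_{k≥1} ((2d)!/k!) Σ_{a_1+…+a_k = d, a_i > 0} Π_{i=1}^{k} ( p_{a_i}² · z_{a_i} / (2a_i)! ) for d ≥ 1. Then σ(z_d) = z_d for all d ≥ 1; that is, each z_d is invariant under the substitution t ↦ t^{−1} (equivalently q ↦ q^{−1} for q = t²). -/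
/-!
Each `p_k` is fixed by `t ↦ t⁻¹`: replacing `-t` by its inverse negates both numerator and
denominator. The recursion builds `z_{d+1}` out of rational constants, the `p_a` and the
`z_a` with `a ≤ d` by field operations only, so by strong induction every `z_d` lies in the
fixed field of `σ`.
-/

open Finset

/-- The quantum integer `[k]_y`; `shiftedP k` is `qInt (-t) k`. -/
def qInt {K : Type*} [DivisionRing K] (y : K) (k : ℤ) : K :=
  (y ^ k - y ^ (-k)) / (y - y⁻¹)

lemma qInt_inv {K : Type*} [DivisionRing K] (y : K) (k : ℤ) : qInt y⁻¹ k = qInt y k := by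
  rw [qInt, qInt, inv_zpow', inv_zpow', neg_neg, inv_inv, ← neg_sub (y ^ k), ← neg_sub y,
    neg_div_neg_eq]

lemma map_shiftedP (σ : RatFunc ℚ →+* RatFunc ℚ) (hσ : σ RatFunc.X = RatFunc.X⁻¹) (k : ℕ) :
    σ (shiftedP k) = shiftedP k := by
  have hneg : σ (-RatFunc.X) = (-RatFunc.X)⁻¹ := by rw [map_neg, hσ, inv_neg]
  simp only [shiftedP, map_div₀, map_sub, map_zpow₀, map_inv₀, hneg]
  exact qInt_inv (-RatFunc.X) k

section Recursion

variable {K : Type*} [Field K]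

/-- The right-hand side of the recursion for `z_{d+1}`, with the weights `p` as a parameter. -/
def zStep (p z : ℕ → K) (d : ℕ) : K :=
  ∑ k ∈ Icc 1 d, ((Nat.factorial (2 * d) : K) / (Nat.factorial k : K)) *
    ∑ c ∈ (Nat.antidiagonalTuple k d).filter (fun c => ∀ i, 0 < c i),
      ∏ i, p (c i) ^ 2 * z (c i) / (Nat.factorial (2 * c i) : K)

lemma zStep_mem {S : Subfield K} {p z : ℕ → K} {d : ℕ} (hp : ∀ a, p a ∈ S)
    (hz : ∀ a, 1 ≤ a → a ≤ d → z a ∈ S) : zStep p z d ∈ S := by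
  refine S.sum_mem fun k _ => S.mul_mem (S.div_mem (natCast_mem S _) (natCast_mem S _)) ?_
  refine S.sum_mem fun c hc => S.prod_mem fun i _ => ?_
  obtain ⟨hsum, hpos⟩ := mem_filter.mp hc
  have hle : c i ≤ d := (Nat.mem_antidiagonalTuple.mp hsum) ▸
    single_le_sum (fun j _ => Nat.zero_le (c j)) (mem_univ i)
  exact S.div_mem (S.mul_mem (S.pow_mem (hp _) 2) (hz _ (hpos i) hle)) (natCast_mem S _)

lemma mem_of_eq_zStep {S : Subfield K} {p z : ℕ → K} (hp : ∀ a, p a ∈ S) (hz1 : z 1 ∈ S)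
    (hrec : ∀ d, 1 ≤ d → z (d + 1) = zStep p z d) : ∀ d, 1 ≤ d → z d ∈ S := by
  intro d hd
  induction d using Nat.strong_induction_on with
  | _ d ih =>
    rcases Nat.lt_or_ge d 2 with hlt | hge
    · obtain rfl : d = 1 := by omega
      exact hz1
    · obtain ⟨e, rfl⟩ : ∃ e, d = e + 1 := ⟨d - 1, by omega⟩
      rw [hrec e (by omega)]
      exact zStep_mem hp fun a ha hae => ih a (by omega) ha

end Recursion

/-- Let `σ` be the field automorphism of `ℚ(t)` with `σ(t) = t⁻¹`, and let `z` be
defined recursively by `z 1 = 1` and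
`z_{d+1} = Σ_{k≥1} ((2d)!/k!) Σ_{a_1+…+a_k=d, a_i>0} Π_i p_{a_i}²·z_{a_i}/(2a_i)!`
for `d ≥ 1`. Then `σ(z_d) = z_d` for all `d ≥ 1`, i.e. each `z_d` is invariant under
`t ↦ t⁻¹`. -/
theorem z_invariant_under_q_inverse (σ : RatFunc ℚ ≃+* RatFunc ℚ)
    (hσ : σ RatFunc.X = (RatFunc.X)⁻¹)
    (z : ℕ → RatFunc ℚ) (hz1 : z 1 = 1)
    (hrec : ∀ d : ℕ, 1 ≤ d →
      z (d + 1) = ∑ k ∈ Finset.Icc 1 d,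
        ((Nat.factorial (2 * d) : RatFunc ℚ) / (Nat.factorial k : RatFunc ℚ)) *
          ∑ c ∈ (Finset.Nat.antidiagonalTuple k d).filter (fun c => ∀ i, 0 < c i),
            ∏ i, (shiftedP (c i)) ^ 2 * z (c i) / (Nat.factorial (2 * c i) : RatFunc ℚ)) :
    ∀ d : ℕ, 1 ≤ d → σ (z d) = z d := by
  let fixedField := (σ : RatFunc ℚ →+* RatFunc ℚ).eqLocusField (RingHom.id _)
  have hp : ∀ a, shiftedP a ∈ fixedField := map_shiftedP σ hσ
  have hz1_fixed : z 1 ∈ fixedField := by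
    rw [RingHom.mem_eqLocusField, hz1]
    exact map_one _
  exact mem_of_eq_zStep hp hz1_fixed hrec
end
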